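/- arXiv:2308.07455 — 7 statements merged into one kernel-verified Lean document; each statement's English description precedes it below -/
import Mathlib

section
/- For every integer $n \ge 4$, the number of semimagic quad squares using cards from the EvenQuads-$2^n$ deck equals $2^n(2^n-1)(2^n-2)(2^n-4)(2^n-8)$ times the number of semimagic quad squares of type C over the same deck. -/
/-- A card in the EvenQuads-`2^n` deck, modeled as a vector in `(ℤ/2)^n`. -/
abbrev Deck (n : ℕ) := Fin n → ZMod 2

/-- Identification of the integer `k` (via binary representation) with a card. -/
def numToCard (n k : ℕ) : Deck n := fun i => if Nat.testBit k i.val then 1 else 0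

/-- A quad square is semimagic if every row and every column sums to zero. -/
def IsSemimagic {n : ℕ} (M : Fin 4 × Fin 4 → Deck n) : Prop :=
  (∀ i : Fin 4, ∑ j : Fin 4, M (i, j) = 0) ∧ (∀ j : Fin 4, ∑ i : Fin 4, M (i, j) = 0)

/-- A quad square is magic if it is semimagic and both diagonals sum to zero. -/
def IsMagic {n : ℕ} (M : Fin 4 × Fin 4 → Deck n) : Prop :=
  IsSemimagic M ∧ (∑ i : Fin 4, M (i, i) = 0) ∧ (∑ i : Fin 4, M (i, 3 - i) = 0)

/-- Identification of `Fin 4` with `(ℤ/2)^2` via binary representation. -/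
def finToVec (a : Fin 4) : Fin 2 → ZMod 2 := fun i => if Nat.testBit a.val i.val then 1 else 0

/-- A grid position as an element of `(ℤ/2)^2 × (ℤ/2)^2 ≅ (ℤ/2)^4`. -/
def posVec (p : Fin 4 × Fin 4) : (Fin 2 → ZMod 2) × (Fin 2 → ZMod 2) :=
  (finToVec p.1, finToVec p.2)

/-- A quad square is strongly magic if any four pairwise distinct positions summing to
zero in `(ℤ/2)^4` carry cards summing to zero. -/
def IsStronglyMagic {n : ℕ} (M : Fin 4 × Fin 4 → Deck n) : Prop :=
  ∀ p1 p2 p3 p4 : Fin 4 × Fin 4,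
    p1 ≠ p2 → p1 ≠ p3 → p1 ≠ p4 → p2 ≠ p3 → p2 ≠ p4 → p3 ≠ p4 →
    posVec p1 + posVec p2 + posVec p3 + posVec p4 = 0 →
    M p1 + M p2 + M p3 + M p4 = 0

/-- A quad square is of type C if its first row is `0,1,2,3` and
its first column is `0,4,8,12`. -/
def IsTypeC {n : ℕ} (M : Fin 4 × Fin 4 → Deck n) : Prop :=
  (∀ j : Fin 4, M (0, j) = numToCard n j.val) ∧
  (∀ i : Fin 4, M (i, 0) = numToCard n (4 * i.val))

/-!
Record an injective semimagic square `M` by its corner card `M (0, 0)` and the four displacements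
from it to `M (0, 1)`, `M (0, 2)`, `M (1, 0)`, `M (2, 0)`. These displacements are linearly
independent over `ZMod 2`, and since a zero-sum row or column satisfies `w 3 = w 0 + w 1 + w 2`,
the squares of type C are exactly those with corner `0` and displacements the standard vectors
`1, 2, 4, 8`. Affine automorphisms of the deck act on squares compatibly with this record, and they
act transitively on the possible records (a point and four independent vectors), so every fibre of
the record map is in bijection with the type C squares. There are
`2^n (2^n - 1) (2^n - 2) (2^n - 4) (2^n - 8)` records.
-/

theorem LinearIndependent.exists_linearEquiv_apply_eq {K V ι : Type*} [DivisionRing K]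
    [AddCommGroup V] [Module K V] [FiniteDimensional K V] {v w : ι → V}
    (hv : LinearIndependent K v) (hw : LinearIndependent K w) :
    ∃ L : V ≃ₗ[K] V, ∀ i, L (v i) = w i := by
  obtain ⟨L, hL⟩ := Submodule.exists_linearEquiv_restrict_eq
    (hv.linearCombinationEquiv.symm ≪≫ₗ hw.linearCombinationEquiv)
  refine ⟨L, fun i => ?_⟩
  have hvi : v i ∈ Submodule.span K (Set.range v) := Submodule.subset_span (Set.mem_range_self i)
  rw [← hL ⟨v i, hvi⟩]
  change (hw.linearCombinationEquiv (hv.repr ⟨v i, hvi⟩) : V) = w i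
  simp [hv.repr_eq_single i ⟨v i, hvi⟩ rfl]

theorem Nat.card_eq_mul_of_nonempty_fiber_equiv {α β γ : Type*} (f : α → β)
    (h : ∀ b, Nonempty ({a // f a = b} ≃ γ)) : Nat.card α = Nat.card β * Nat.card γ := by
  rw [← Nat.card_prod]
  exact Nat.card_congr <| (Equiv.sigmaFiberEquiv f).symm.trans <|
    (Equiv.sigmaCongrRight fun b => (h b).some).trans (Equiv.sigmaEquivProd β γ)

section CharTwo

variable {V W : Type*} [AddCommGroup V] [Module (ZMod 2) V] [AddCommGroup W] [Module (ZMod 2) W]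

theorem AffineMap.sum_apply_eq_zero_of_even_card {ι : Type*} [Fintype ι]
    (hι : Even (Fintype.card ι)) (f : V →ᵃ[ZMod 2] W) {v : ι → V} (hv : ∑ i, v i = 0) :
    ∑ i, f (v i) = 0 := by
  obtain ⟨k, hk⟩ := hι
  rw [f.decomp]
  simp only [Pi.add_apply, Finset.sum_add_distrib, ← map_sum, hv, map_zero,
    Finset.sum_const, Finset.card_univ, hk, add_nsmul, ZModModule.add_self]

theorem exists_smul_add_smul_eq_sub_of_sum_eq_zero {w : Fin 4 → V} (hw : ∑ i, w i = 0)
    (a b : ZMod 2) :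
    ∃ j, a • (w 1 - w 0) + b • (w 2 - w 0) = w j - w 0 ∧ (j = 0 → a = 0 ∧ b = 0) := by
  rw [Fin.sum_univ_four] at hw
  obtain rfl | rfl : a = 0 ∨ a = 1 := by revert a; decide
  all_goals obtain rfl | rfl : b = 0 ∨ b = 1 := by revert b; decide
  · exact ⟨0, by simp⟩
  · exact ⟨2, by simp⟩
  · exact ⟨1, by simp⟩
  · refine ⟨3, ?_, by simp⟩
    linear_combination (norm := module) hw - ZModModule.add_self (w 0) - ZModModule.add_self (w 3)

theorem eq_add_add_of_sum_fin_four_eq_zero {w : Fin 4 → V} (hw : ∑ i, w i = 0) :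
    w 3 = w 0 + w 1 + w 2 := by
  rw [Fin.sum_univ_four] at hw
  linear_combination (norm := module) hw - ZModModule.add_self (w 0) - ZModModule.add_self (w 1)
    - ZModModule.add_self (w 2)

end CharTwo

variable {n : ℕ}

@[simp]
theorem numToCard_zero : numToCard n 0 = 0 := by
  ext i
  simp [numToCard]

theorem numToCard_xor (a b : ℕ) : numToCard n (a ^^^ b) = numToCard n a + numToCard n b := by
  ext i
  simp only [numToCard, Nat.testBit_xor, Pi.add_apply]
  cases a.testBit i <;> cases b.testBit i <;> decide

theorem numToCard_two_pow (i : Fin n) : numToCard n (2 ^ i.val) = Pi.single i 1 := by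
  ext j
  simp [numToCard, Nat.testBit_two_pow, Pi.single_apply, Fin.val_inj, eq_comm]

theorem IsSemimagic.comp_affineMap {m : ℕ} {M : Fin 4 × Fin 4 → Deck n} (hM : IsSemimagic M)
    (f : Deck n →ᵃ[ZMod 2] Deck m) : IsSemimagic (f ∘ M) :=
  have h4 : Even (Fintype.card (Fin 4)) := ⟨2, rfl⟩
  ⟨fun i => f.sum_apply_eq_zero_of_even_card h4 (hM.1 i),
    fun j => f.sum_apply_eq_zero_of_even_card h4 (hM.2 j)⟩

theorem isSemimagic_comp_affineEquiv_iff {m : ℕ} {M : Fin 4 × Fin 4 → Deck n}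
    (f : Deck n ≃ᵃ[ZMod 2] Deck m) : IsSemimagic (f ∘ M) ↔ IsSemimagic M :=
  ⟨fun h => by simpa [Function.comp_def] using h.comp_affineMap f.symm.toAffineMap,
    fun h => h.comp_affineMap f.toAffineMap⟩

abbrev SemimagicSquare (n : ℕ) :=
  {M : Fin 4 × Fin 4 → Deck n // Function.Injective M ∧ IsSemimagic M}

def SemimagicSquare.affineCongr {m : ℕ} (f : Deck n ≃ᵃ[ZMod 2] Deck m) :
    SemimagicSquare n ≃ SemimagicSquare m :=
  (Equiv.piCongrRight fun _ => f.toEquiv).subtypeEquiv fun _ =>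
    and_congr (f.injective.of_comp_iff _).symm (isSemimagic_comp_affineEquiv_iff f).symm

def cornerFrame (M : Fin 4 × Fin 4 → Deck n) : Fin 4 → Deck n :=
  ![M (0, 1) - M (0, 0), M (0, 2) - M (0, 0), M (1, 0) - M (0, 0), M (2, 0) - M (0, 0)]

theorem linearIndependent_cornerFrame {M : Fin 4 × Fin 4 → Deck n}
    (hM : Function.Injective M) (hS : IsSemimagic M) :
    LinearIndependent (ZMod 2) (cornerFrame M) := by
  rw [Fintype.linearIndependent_iff]
  intro g hg
  obtain ⟨j, hj, hj0⟩ := exists_smul_add_smul_eq_sub_of_sum_eq_zero (hS.1 0) (g 0) (g 1)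
  obtain ⟨i, hi, hi0⟩ := exists_smul_add_smul_eq_sub_of_sum_eq_zero (hS.2 0) (g 2) (g 3)
  replace hg : g 0 • (M (0, 1) - M (0, 0)) + g 1 • (M (0, 2) - M (0, 0)) +
      (g 2 • (M (1, 0) - M (0, 0)) + g 3 • (M (2, 0) - M (0, 0))) = 0 := by
    simpa [Fin.sum_univ_four, cornerFrame, add_assoc] using hg
  -- The combination is a row difference plus a column difference, hence two equal cards.
  rw [hj, hi] at hg
  have hji : M (0, j) = M (i, 0) := by
    linear_combination (norm := module) hg - ZModModule.add_self (M (i, 0))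
      + ZModModule.add_self (M (0, 0))
  obtain ⟨rfl, rfl⟩ : 0 = i ∧ j = 0 := Prod.ext_iff.1 (hM hji)
  obtain ⟨h0, h1⟩ := hj0 rfl
  obtain ⟨h2, h3⟩ := hi0 rfl
  intro k
  fin_cases k <;> assumption

abbrev CornerData (n : ℕ) := Deck n × {x : Fin 4 → Deck n // LinearIndependent (ZMod 2) x}

def cornerData (M : SemimagicSquare n) : CornerData n :=
  (M.1 (0, 0), ⟨cornerFrame M.1, linearIndependent_cornerFrame M.2.1 M.2.2⟩)

def CornerData.map {m : ℕ} (f : Deck n ≃ᵃ[ZMod 2] Deck m) (t : CornerData n) :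
    CornerData m :=
  (f t.1, ⟨f.linear ∘ t.2.1, t.2.2.map' f.linear.toLinearMap f.linear.ker⟩)

theorem CornerData.map_injective {m : ℕ} (f : Deck n ≃ᵃ[ZMod 2] Deck m) :
    Function.Injective (CornerData.map f) := by
  intro s t h
  simp only [CornerData.map, Prod.mk.injEq, Subtype.mk.injEq] at h
  exact Prod.ext (f.injective h.1) (Subtype.ext (f.linear.injective.comp_left h.2))

theorem cornerData_affineCongr {m : ℕ} (f : Deck n ≃ᵃ[ZMod 2] Deck m)
    (M : SemimagicSquare n) :
    cornerData (SemimagicSquare.affineCongr f M) = CornerData.map f (cornerData M) := by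
  refine Prod.ext rfl (Subtype.ext (funext fun k => ?_))
  fin_cases k <;> exact (f.toAffineMap.linearMap_vsub _ _).symm

def stdFrame (n : ℕ) : Fin 4 → Deck n := fun i => numToCard n (2 ^ i.val)

theorem linearIndependent_stdFrame (hn : 4 ≤ n) : LinearIndependent (ZMod 2) (stdFrame n) := by
  have h : stdFrame n = Pi.basisFun (ZMod 2) (Fin n) ∘ Fin.castLE hn := by
    funext i
    simp [stdFrame, ← numToCard_two_pow]
  rw [h]
  exact (Pi.basisFun (ZMod 2) (Fin n)).linearIndependent.comp _ (Fin.castLE_injective hn)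

theorem isTypeC_iff {M : Fin 4 × Fin 4 → Deck n} (hS : IsSemimagic M) :
    IsTypeC M ↔ M (0, 0) = 0 ∧ cornerFrame M = stdFrame n := by
  constructor
  · rintro ⟨hrow, hcol⟩
    have h00 : M (0, 0) = 0 := by simpa using hrow 0
    refine ⟨h00, funext fun k => ?_⟩
    fin_cases k <;> simp [cornerFrame, stdFrame, h00, hrow, hcol]
  · rintro ⟨h00, hf⟩
    have h01 : M (0, 1) = numToCard n 1 := by
      simpa [cornerFrame, stdFrame, h00] using congrFun hf 0
    have h02 : M (0, 2) = numToCard n 2 := by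
      simpa [cornerFrame, stdFrame, h00] using congrFun hf 1
    have h10 : M (1, 0) = numToCard n 4 := by
      simpa [cornerFrame, stdFrame, h00] using congrFun hf 2
    have h20 : M (2, 0) = numToCard n 8 := by
      simpa [cornerFrame, stdFrame, h00] using congrFun hf 3
    have h03 : M (0, 3) = numToCard n 3 := by
      rw [eq_add_add_of_sum_fin_four_eq_zero (hS.1 0), h00, h01, h02, zero_add]
      exact (numToCard_xor 1 2).symm
    have h30 : M (3, 0) = numToCard n 12 := by
      rw [eq_add_add_of_sum_fin_four_eq_zero (hS.2 0), h00, h10, h20, zero_add]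
      exact (numToCard_xor 4 8).symm
    constructor <;> intro k <;> fin_cases k <;> simp [h00, h01, h02, h03, h10, h20, h30]

def CornerData.std (hn : 4 ≤ n) : CornerData n :=
  (0, ⟨stdFrame n, linearIndependent_stdFrame hn⟩)

theorem cornerData_eq_std_iff (hn : 4 ≤ n) (M : SemimagicSquare n) :
    cornerData M = CornerData.std hn ↔ IsTypeC M.1 := by
  rw [isTypeC_iff M.2.2]
  simp [cornerData, CornerData.std, Prod.ext_iff]

def fiberCornerDataEquiv {m : ℕ} (f : Deck n ≃ᵃ[ZMod 2] Deck m) (t : CornerData n) :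
    {M : SemimagicSquare n // cornerData M = t} ≃
      {M : SemimagicSquare m // cornerData M = CornerData.map f t} :=
  (SemimagicSquare.affineCongr f).subtypeEquiv fun M => by
    rw [cornerData_affineCongr, (CornerData.map_injective f).eq_iff]

theorem nonempty_fiber_cornerData_equiv (hn : 4 ≤ n) (t : CornerData n) :
    Nonempty ({M : SemimagicSquare n // cornerData M = t} ≃
      {M : Fin 4 × Fin 4 → Deck n // Function.Injective M ∧ IsSemimagic M ∧ IsTypeC M}) := by
  obtain ⟨c, x, hx⟩ := t
  obtain ⟨L, hL⟩ := (linearIndependent_stdFrame hn).exists_linearEquiv_apply_eq hx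
  let f : Deck n ≃ᵃ[ZMod 2] Deck n := AffineEquiv.ofLinearEquiv L 0 c
  have hf : CornerData.map f (CornerData.std hn) = (c, ⟨x, hx⟩) :=
    Prod.ext (by simp [f, CornerData.map, CornerData.std]) (Subtype.ext (funext hL))
  rw [← hf]
  exact ⟨(fiberCornerDataEquiv f _).symm.trans <|
    (Equiv.subtypeEquivRight (cornerData_eq_std_iff hn)).trans <|
      (Equiv.subtypeSubtypeEquivSubtypeInter _ _).trans
        (Equiv.subtypeEquivRight fun _ => and_assoc)⟩

theorem card_cornerData (hn : 4 ≤ n) :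
    Nat.card (CornerData n) = 2 ^ n * ((2 ^ n - 1) * (2 ^ n - 2) * (2 ^ n - 4) * (2 ^ n - 8)) := by
  have hdim : Module.finrank (ZMod 2) (Deck n) = n := Module.finrank_fin_fun _
  rw [Nat.card_prod, card_linearIndependent (by rwa [hdim]), hdim]
  simp [Fin.prod_univ_four]

theorem semimagic_count_eq_factor_mul_typeC (n : ℕ) (hn : 4 ≤ n) :
    (Nat.card {M : Fin 4 × Fin 4 → Deck n // Function.Injective M ∧ IsSemimagic M} : ℤ) =
      2 ^ n * (2 ^ n - 1) * (2 ^ n - 2) * (2 ^ n - 4) * (2 ^ n - 8) *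
        (Nat.card {M : Fin 4 × Fin 4 → Deck n //
          Function.Injective M ∧ IsSemimagic M ∧ IsTypeC M} : ℤ) := by
  have hcount := Nat.card_eq_mul_of_nonempty_fiber_equiv cornerData
    (nonempty_fiber_cornerData_equiv hn)
  have h16 : 2 ^ 4 ≤ 2 ^ n := Nat.pow_le_pow_right two_pos hn
  rw [hcount, card_cornerData hn]
  push_cast [Nat.cast_sub (by omega : 1 ≤ 2 ^ n), Nat.cast_sub (by omega : 2 ≤ 2 ^ n),
    Nat.cast_sub (by omega : 4 ≤ 2 ^ n), Nat.cast_sub (by omega : 8 ≤ 2 ^ n)]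
  ring
end

section
/- A strongly magic quad square is uniquely determined by its first row and first column: if $M$ and $M'$ are strongly magic quad squares over the EvenQuads-$2^n$ deck with $M(0,j) = M'(0,j)$ for all $j$ and $M(i,0) = M'(i,0)$ for all $i$, then $M = M'$. -/
theorem stronglyMagic_determined_by_first_row_and_column (n : ℕ)
    (M M' : Fin 4 × Fin 4 → Deck n)
    (hM : Function.Injective M) (hMs : IsStronglyMagic M)
    (hM' : Function.Injective M') (hM's : IsStronglyMagic M')
    (hrow : ∀ j : Fin 4, M (0, j) = M' (0, j))
    (hcol : ∀ i : Fin 4, M (i, 0) = M' (i, 0)) :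
    M = M' := by
  have key : ∀ (N : Fin 4 × Fin 4 → Deck n), IsStronglyMagic N → ∀ i j : Fin 4,
      i ≠ 0 → j ≠ 0 → N (i, j) = N (0, 0) + N (0, j) + N (i, 0) := by
    intro N hNs i j hi hj
    have hsum : posVec (0, 0) + posVec (0, j) + posVec (i, 0) + posVec (i, j) = 0 := by
      fin_cases i <;> fin_cases j <;> decide
    have h := hNs (0, 0) (0, j) (i, 0) (i, j)
      (by simp [Prod.ext_iff]; exact fun h => (hj h.symm).elim)
      (by simp [Prod.ext_iff]; exact fun h => (hi h.symm).elim)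
      (by simp [Prod.ext_iff]; exact fun h => (hi h.symm).elim)
      (by simp [Prod.ext_iff]; exact fun h => (hi h.symm).elim)
      (by simp [Prod.ext_iff]; exact fun h => (hi h.symm).elim)
      (by simp [Prod.ext_iff]; exact fun h => (hj h.symm).elim)
      hsum
    have hneg : ∀ x : ZMod 2, -x = x := by decide
    have := eq_neg_of_add_eq_zero_right h
    rw [this]
    funext k
    simp [hneg]
  funext p
  obtain ⟨i, j⟩ := p
  by_cases hi : i = 0
  · subst hi; exact hrow j
  by_cases hj : j = 0
  · subst hj; exact hcol i
  rw [key M hMs i j hi hj, key M' hM's i j hi hj, hrow 0, hrow j, hcol i]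
end

section
/- Let $M : \mathrm{Fin}\,4 \times \mathrm{Fin}\,4 \to (\mathbb{Z}/2)^2$ be such that every row sums to zero, every column sums to zero, and every element of $(\mathbb{Z}/2)^2$ occurs exactly four times among the 16 entries. If some column of $M$ is constant (all four entries equal, i.e., a column of type S), then every row of $M$ has four pairwise distinct entries (i.e., every row is of type D). -/
theorem all_rows_typeD_of_constant_column
    (M : Fin 4 × Fin 4 → (Fin 2 → ZMod 2))
    (hrow : ∀ i : Fin 4, ∑ j : Fin 4, M (i, j) = 0)
    (hcol : ∀ j : Fin 4, ∑ i : Fin 4, M (i, j) = 0)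
    (hdist : ∀ v : Fin 2 → ZMod 2,
      (Finset.univ.filter fun p : Fin 4 × Fin 4 => M p = v).card = 4)
    (hS : ∃ j : Fin 4, ∀ i i' : Fin 4, M (i, j) = M (i', j)) :
    ∀ i : Fin 4, Function.Injective fun j : Fin 4 => M (i, j) := by
  classical
  obtain ⟨j0, hj0⟩ := hS
  intro i j1 j2 hh
  have h : M (i, j1) = M (i, j2) := hh
  by_contra hne
  set c := M ((0 : Fin 4), j0) with hc
  have htwo : ∀ v : Fin 2 → ZMod 2, v + v = 0 := by
    intro v; funext k
    have h2 : (2 : ZMod 2) = 0 := rfl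
    show v k + v k = 0
    linear_combination (v k) * h2
  have key : ∀ p : Fin 4 × Fin 4, M p = c → p.2 = j0 := by
    intro p hp
    by_contra hp2
    have hsub : insert p ((Finset.univ : Finset (Fin 4)).image fun a => (a, j0)) ⊆
        Finset.univ.filter fun q : Fin 4 × Fin 4 => M q = c := by
      intro q hq
      rcases Finset.mem_insert.mp hq with rfl | hq
      · simp [hp]
      · obtain ⟨a, -, rfl⟩ := Finset.mem_image.mp hq
        simp only [Finset.mem_filter, Finset.mem_univ, true_and]
        exact hj0 a 0
    have hnotmem : p ∉ (Finset.univ : Finset (Fin 4)).image fun a => (a, j0) := by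
      simp only [Finset.mem_image]
      rintro ⟨a, -, rfl⟩
      exact hp2 rfl
    have hinj : Function.Injective fun a : Fin 4 => ((a, j0) : Fin 4 × Fin 4) := by
      intro a b hab
      exact (Prod.ext_iff.mp hab).1
    have hcard := Finset.card_le_card hsub
    rw [Finset.card_insert_of_notMem hnotmem, Finset.card_image_of_injective _ hinj,
      Finset.card_univ, Fintype.card_fin, hdist c] at hcard
    omega
  have hcol0 : M (i, j0) = c := (hj0 i 0).trans hc.symm
  have hcj : ∀ j, j ≠ j0 → M (i, j) ≠ c := fun j hj hEq => hj (key (i, j) hEq)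
  by_cases e1 : j1 = j0
  · exact hcj j2 (fun e => hne (by rw [e1, e])) (by rw [← h, e1]; exact hcol0)
  by_cases e2 : j2 = j0
  · exact hcj j1 (fun e => hne (e.trans e2.symm)) (by rw [h, e2]; exact hcol0)
  have hpair : M (i, j1) + M (i, j2) = 0 := by rw [h]; exact htwo _
  have hrest : ∑ j ∈ Finset.univ \ ({j1, j2} : Finset (Fin 4)), M (i, j) = 0 := by
    have hs := Finset.sum_sdiff (f := fun j => M (i, j))
      (Finset.subset_univ ({j1, j2} : Finset (Fin 4)))
    rw [Finset.sum_pair hne, hpair, hrow i] at hs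
    simpa using hs
  have hmem0 : j0 ∈ Finset.univ \ ({j1, j2} : Finset (Fin 4)) := by
    simp only [Finset.mem_sdiff, Finset.mem_univ, Finset.mem_insert, Finset.mem_singleton,
      true_and]
    push_neg
    exact ⟨fun e => e1 e.symm, fun e => e2 e.symm⟩
  have hcard2 : (Finset.univ \ ({j1, j2} : Finset (Fin 4))).card = 2 := by
    rw [Finset.card_sdiff_of_subset (Finset.subset_univ _), Finset.card_pair hne, Finset.card_univ,
      Fintype.card_fin]
  obtain ⟨j3, hj3⟩ := Finset.card_eq_one.mp
    (show ((Finset.univ \ ({j1, j2} : Finset (Fin 4))).erase j0).card = 1 by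
      rw [Finset.card_erase_of_mem hmem0, hcard2])
  have hj3ne : j3 ≠ j0 := (Finset.mem_erase.mp (hj3 ▸ Finset.mem_singleton_self j3)).1
  have hsum2 : M (i, j0) + M (i, j3) = 0 := by
    have hr := hrest
    rw [← Finset.insert_erase hmem0, hj3, Finset.sum_insert (by
      simp only [Finset.mem_singleton]; exact fun e => hj3ne e.symm),
      Finset.sum_singleton] at hr
    exact hr
  exact hcj j3 hj3ne (by linear_combination hsum2 - hcol0 - htwo c)
end

section
/- Let $f : (\mathbb{Z}/2)^4 \to (\mathbb{Z}/2)^2$ be a function such that for all pairwise distinct $p_1, p_2, p_3, p_4 \in (\mathbb{Z}/2)^4$ with $p_1+p_2+p_3+p_4 = 0$, one has $f(p_1)+f(p_2)+f(p_3)+f(p_4) = 0$. Then the image of $f$ does not consist of exactly three elements. -/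
/-!
Applying the quad condition to `p, q, 0, p + q` gives `f (p + q) = f p + f q + f 0`, so
`p ↦ f p + f 0` is additive. The image of `f` is a translate of the range of this homomorphism,
an additive subgroup of `(ZMod 2)²`, whose order divides `4`.
-/

open Finset
open ZModModule (add_self)

def IsQuadPreserving {V W : Type*} [AddCommGroup V] [AddCommGroup W] (f : V → W) : Prop :=
  ∀ p1 p2 p3 p4 : V, p1 ≠ p2 → p1 ≠ p3 → p1 ≠ p4 → p2 ≠ p3 → p2 ≠ p4 → p3 ≠ p4 →
    p1 + p2 + p3 + p4 = 0 → f p1 + f p2 + f p3 + f p4 = 0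

namespace IsQuadPreserving

variable {V W : Type*} [AddCommGroup V] [Module (ZMod 2) V] [AddCommGroup W] [Module (ZMod 2) W]
  {f : V → W}

theorem map_add (hf : IsQuadPreserving f) (p q : V) : f (p + q) = f p + f q + f 0 := by
  by_cases hp : p = 0
  · subst hp; rw [zero_add, add_right_comm, add_self, zero_add]
  by_cases hq : q = 0
  · subst hq; rw [add_zero, add_assoc, add_self, add_zero]
  by_cases hpq : p = q
  · subst hpq; rw [add_self, add_self, zero_add]
  have hsum : p + q ≠ 0 := fun h => hpq <| by
    rwa [add_eq_zero_iff_eq_neg, ZModModule.neg_eq_self] at h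
  have hquad := hf p q 0 (p + q) hpq hp (fun h => hq (left_eq_add.mp h)) hq
    (fun h => hp (right_eq_add.mp h)) hsum.symm (by rw [add_zero, add_self])
  rw [← ZModModule.neg_eq_self (f p + f q + f 0)]
  exact eq_neg_of_add_eq_zero_right hquad

def toAddMonoidHom (hf : IsQuadPreserving f) : V →+ W :=
  AddMonoidHom.mk' (fun p => f p + f 0) fun p q => by
    rw [hf.map_add, add_add_add_comm (f p), add_assoc (f p + f q)]

theorem toAddMonoidHom_apply (hf : IsQuadPreserving f) (p : V) :
    hf.toAddMonoidHom p = f p + f 0 := rfl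

theorem card_image_dvd_card [Fintype V] [Fintype W] [DecidableEq W] (hf : IsQuadPreserving f) :
    #(univ.image f) ∣ Fintype.card W := by
  have htranslate : univ.image f = (univ.image hf.toAddMonoidHom).image (· + f 0) := by
    simp only [image_image, Function.comp_def, toAddMonoidHom_apply, add_assoc, add_self, add_zero]
  rw [htranslate, card_image_of_injective _ (add_left_injective _), ← Set.toFinset_range,
    ← Nat.card_eq_card_toFinset, ← AddMonoidHom.coe_range, Nat.card_coe_set_eq,
    ← Nat.card_eq_fintype_card]
  exact AddSubgroup.card_addSubgroup_dvd_card _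

end IsQuadPreserving

theorem range_not_three_of_quad_preserving
    (f : (Fin 4 → ZMod 2) → (Fin 2 → ZMod 2))
    (hf : ∀ p1 p2 p3 p4 : Fin 4 → ZMod 2,
      p1 ≠ p2 → p1 ≠ p3 → p1 ≠ p4 → p2 ≠ p3 → p2 ≠ p4 → p3 ≠ p4 →
      p1 + p2 + p3 + p4 = 0 → f p1 + f p2 + f p3 + f p4 = 0) :
    (Finset.univ.image f).card ≠ 3 := by
  intro hcard
  have hdvd := IsQuadPreserving.card_image_dvd_card hf
  rw [hcard] at hdvd
  simp at hdvd
end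

section
/- There are exactly 112 semimagic quad squares of type C over the EvenQuads-16 deck (the case $n = 4$). -/
local notation "nn" k => numToCard 4 k

lemma numToCard_xor_s13 (j k : ℕ) : numToCard 4 (j ^^^ k) = numToCard 4 j + numToCard 4 k := by
  funext i
  simp only [numToCard, Nat.testBit_xor, Pi.add_apply]
  cases h1 : Nat.testBit j i.val <;> cases h2 : Nat.testBit k i.val <;> simp <;> decide

lemma addself (x : Deck 4) : x + x = 0 := by
  funext i; exact CharTwo.add_self_eq_zero (x i)

def mkM (a b c d : Deck 4) : Fin 4 × Fin 4 → Deck 4 := fun p =>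
  ![![nn 0, nn 1, nn 2, nn 3],
    ![nn 4, a, b, (nn 4) + a + b],
    ![nn 8, c, d, (nn 8) + c + d],
    ![nn 12, (nn 1) + a + c, (nn 2) + b + d, (nn 15) + a + b + c + d]] p.1 p.2

example (a b c d : Deck 4) : ∑ j : Fin 4, mkM a b c d (1, j) = 0 := by
  rw [Fin.sum_univ_four]
  show (nn 4) + a + b + ((nn 4) + a + b) = 0
  exact addself _

lemma mkM_semimagic (a b c d : Deck 4) : IsSemimagic (mkM a b c d) := by
  constructor
  · intro i; fin_cases i <;> rw [Fin.sum_univ_four]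
    · show (nn 0) + (nn 1) + (nn 2) + (nn 3) = 0; decide
    · exact addself ((nn 4) + a + b)
    · exact addself ((nn 8) + c + d)
    · show (nn 12) + ((nn 1) + a + c) + ((nn 2) + b + d) + ((nn 15) + a + b + c + d) = 0
      calc (nn 12) + ((nn 1) + a + c) + ((nn 2) + b + d) + ((nn 15) + a + b + c + d)
          = ((nn 12) + (nn 1) + (nn 2) + (nn 15)) + ((a+b+c+d) + (a+b+c+d)) := by ring
        _ = 0 := by rw [addself (a+b+c+d), add_zero]; decide
  · intro j; fin_cases j <;> rw [Fin.sum_univ_four]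
    · show (nn 0) + (nn 4) + (nn 8) + (nn 12) = 0; decide
    · show (nn 1) + a + c + ((nn 1) + a + c) = 0; exact addself _
    · show (nn 2) + b + d + ((nn 2) + b + d) = 0; exact addself _
    · show (nn 3) + ((nn 4) + a + b) + ((nn 8) + c + d) + ((nn 15) + a + b + c + d) = 0
      calc (nn 3) + ((nn 4) + a + b) + ((nn 8) + c + d) + ((nn 15) + a + b + c + d)
          = ((nn 3) + (nn 4) + (nn 8) + (nn 15)) + ((a+b+c+d) + (a+b+c+d)) := by ring
        _ = 0 := by rw [addself (a+b+c+d), add_zero]; decide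

lemma mkM_typeC (a b c d : Deck 4) : IsTypeC (mkM a b c d) := by
  constructor
  · intro j; fin_cases j <;> rfl
  · intro i; fin_cases i <;> rfl

lemma key4 (x y z w : Deck 4) (h : x + y + z + w = 0) : w = x + y + z := by
  have h2 := eq_neg_of_add_eq_zero_right h
  rw [h2]; funext i; exact CharTwo.neg_eq _

lemma eq_mkM (M : Fin 4 × Fin 4 → Deck 4) (hs : IsSemimagic M) (ht : IsTypeC M) :
    M = mkM (M (1,1)) (M (1,2)) (M (2,1)) (M (2,2)) := by
  obtain ⟨hr, hc⟩ := hs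
  obtain ⟨ht0, ht1⟩ := ht
  have h10 : M (1,0) = nn 4 := ht1 1
  have h20 : M (2,0) = nn 8 := ht1 2
  have h01 : M (0,1) = nn 1 := ht0 1
  have h02 : M (0,2) = nn 2 := ht0 2
  have h03 : M (0,3) = nn 3 := ht0 3
  have h13 : M (1,3) = (nn 4) + M (1,1) + M (1,2) := by
    have h := hr 1; rw [Fin.sum_univ_four, h10] at h; exact key4 _ _ _ _ h
  have h23 : M (2,3) = (nn 8) + M (2,1) + M (2,2) := by
    have h := hr 2; rw [Fin.sum_univ_four, h20] at h; exact key4 _ _ _ _ h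
  have h31 : M (3,1) = (nn 1) + M (1,1) + M (2,1) := by
    have h := hc 1; rw [Fin.sum_univ_four, h01] at h; exact key4 _ _ _ _ h
  have h32 : M (3,2) = (nn 2) + M (1,2) + M (2,2) := by
    have h := hc 2; rw [Fin.sum_univ_four, h02] at h; exact key4 _ _ _ _ h
  have h33 : M (3,3) = (nn 15) + M (1,1) + M (1,2) + M (2,1) + M (2,2) := by
    have h := hc 3; rw [Fin.sum_univ_four, h03] at h
    have h4 := key4 _ _ _ _ h
    rw [h13, h23] at h4
    rw [h4]
    have hconst : (nn 3) + (nn 4) + (nn 8) = (nn 15) := by decide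
    linear_combination hconst
  funext p
  obtain ⟨i, j⟩ := p
  fin_cases i <;> fin_cases j
  · exact ht0 0
  · exact ht0 1
  · exact ht0 2
  · exact ht0 3
  · exact ht1 1
  · rfl
  · rfl
  · exact h13
  · exact ht1 2
  · rfl
  · rfl
  · exact h23
  · exact ht1 3
  · exact h31
  · exact h32
  · exact h33

def E1 : {M : Fin 4 × Fin 4 → Deck 4 // Function.Injective M ∧ IsSemimagic M ∧ IsTypeC M} ≃
    {v : Deck 4 × Deck 4 × Deck 4 × Deck 4 //
      Function.Injective (mkM v.1 v.2.1 v.2.2.1 v.2.2.2)} where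
  toFun M := ⟨(M.1 (1,1), M.1 (1,2), M.1 (2,1), M.1 (2,2)), by
    have h := eq_mkM M.1 M.2.2.1 M.2.2.2
    exact h ▸ M.2.1⟩
  invFun v := ⟨mkM v.1.1 v.1.2.1 v.1.2.2.1 v.1.2.2.2,
    v.2, mkM_semimagic _ _ _ _, mkM_typeC _ _ _ _⟩
  left_inv M := Subtype.ext (eq_mkM M.1 M.2.2.1 M.2.2.2).symm
  right_inv v := Subtype.ext rfl

noncomputable def EF : Fin 16 ≃ Deck 4 :=
  Equiv.ofBijective (fun k => numToCard 4 k.val) (by decide)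

noncomputable def E2 : {w : Fin 16 × Fin 16 × Fin 16 × Fin 16 //
      Function.Injective (mkM (numToCard 4 w.1.val) (numToCard 4 w.2.1.val)
        (numToCard 4 w.2.2.1.val) (numToCard 4 w.2.2.2.val))} ≃
    {v : Deck 4 × Deck 4 × Deck 4 × Deck 4 //
      Function.Injective (mkM v.1 v.2.1 v.2.2.1 v.2.2.2)} :=
  Equiv.subtypeEquiv (EF.prodCongr (EF.prodCongr (EF.prodCongr EF))) (fun w => Iff.rfl)

/-- the list of all 16 grid positions, row-major -/
def posL : List (Fin 4 × Fin 4) :=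
  [(0,0),(0,1),(0,2),(0,3),(1,0),(1,1),(1,2),(1,3),
   (2,0),(2,1),(2,2),(2,3),(3,0),(3,1),(3,2),(3,3)]

def natList (a b c d : ℕ) : List ℕ :=
  [0,1,2,3,4,a,b,4^^^a^^^b,8,c,d,8^^^c^^^d,12,1^^^a^^^c,2^^^b^^^d,15^^^a^^^b^^^c^^^d]

def mask (l : List ℕ) : ℕ := l.foldl (fun m x => m ||| 1 <<< x) 0

lemma inj_iff_nodup (M : Fin 4 × Fin 4 → Deck 4) :
    Function.Injective M ↔ (posL.map M).Nodup := by
  constructor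
  · intro h; exact (List.nodup_map_iff h).mpr (by decide)
  · intro h x y hxy
    have complete : ∀ p : Fin 4 × Fin 4, p ∈ posL := by decide
    exact List.inj_on_of_nodup_map h (complete x) (complete y) hxy

lemma map_mkM_eq (a b c d : ℕ) :
    posL.map (mkM (numToCard 4 a) (numToCard 4 b) (numToCard 4 c) (numToCard 4 d)) =
      (natList a b c d).map (numToCard 4) := by
  simp only [posL, natList, List.map_cons, List.map_nil, numToCard_xor_s13]
  rfl

lemma numToCard_injOn {j k : ℕ} (hj : j < 16) (hk : k < 16)
    (h : numToCard 4 j = numToCard 4 k) : j = k := by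
  have : ∀ j' k' : Fin 16, numToCard 4 j'.val = numToCard 4 k'.val → j' = k' := by decide
  have := this ⟨j, hj⟩ ⟨k, hk⟩ h
  exact congrArg Fin.val this

lemma natList_lt (a b c d : ℕ) (ha : a < 16) (hb : b < 16) (hc : c < 16) (hd : d < 16) :
    ∀ x ∈ natList a b c d, x < 16 := by
  have h16 : (16:ℕ) = 2^4 := rfl
  intro x hx
  simp only [natList, List.mem_cons, List.not_mem_nil, or_false] at hx
  rcases hx with h|h|h|h|h|h|h|h|h|h|h|h|h|h|h|h <;> subst h <;>
    first
      | omega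
      | (rw [h16] at *; repeat' apply Nat.xor_lt_two_pow) <;> omega

lemma nodup_map_iff16 (l : List ℕ) (hl : ∀ x ∈ l, x < 16) :
    (l.map (numToCard 4)).Nodup ↔ l.Nodup := by
  constructor
  · exact List.Nodup.of_map _
  · intro h
    exact h.map_on (fun x hx y hy hxy => numToCard_injOn (hl x hx) (hl y hy) hxy)

lemma testBit_foldl (l : List ℕ) : ∀ (A k : ℕ),
    (Nat.testBit (l.foldl (fun m x => m ||| 1 <<< x) A) k = true ↔
      Nat.testBit A k = true ∨ k ∈ l) := by
  induction l with
  | nil => intro A k; simp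
  | cons x t ih =>
    intro A k
    rw [List.foldl_cons, ih]
    simp only [Nat.testBit_or, Nat.one_shiftLeft, Nat.testBit_two_pow,
      Bool.or_eq_true, decide_eq_true_eq, List.mem_cons]
    constructor
    · rintro ((h | h) | h)
      · exact Or.inl h
      · exact Or.inr (Or.inl h.symm)
      · exact Or.inr (Or.inr h)
    · rintro (h | h | h)
      · exact Or.inl (Or.inl h)
      · exact Or.inl (Or.inr h.symm)
      · exact Or.inr h

lemma testBit_65535 (k : ℕ) : Nat.testBit 65535 k = decide (k < 16) := by
  show Nat.testBit (2^16 - 1) k = decide (k < 16)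
  exact Nat.testBit_two_pow_sub_one 16 k

lemma mask_eq_iff (l : List ℕ) (hl : ∀ x ∈ l, x < 16) :
    mask l = 65535 ↔ ∀ k < 16, k ∈ l := by
  constructor
  · intro h k hk
    have ht : Nat.testBit (mask l) k = true := by
      rw [h, testBit_65535]
      simpa using hk
    rcases (testBit_foldl l 0 k).mp ht with h0 | hm
    · simp at h0
    · exact hm
  · intro h
    apply Nat.eq_of_testBit_eq
    intro k
    rw [testBit_65535]
    rcases lt_or_ge k 16 with hk | hk
    · have h1 : Nat.testBit (mask l) k = true := (testBit_foldl l 0 k).mpr (Or.inr (h k hk))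
      rw [h1]
      simp [hk]
    · have h2 : Nat.testBit (mask l) k = false := by
        rcases hb : Nat.testBit (mask l) k with _ | _
        · rfl
        · rcases (testBit_foldl l 0 k).mp hb with h0 | hm
          · simp at h0
          · exact absurd (hl k hm) (by omega)
      rw [h2]
      simp
      omega

lemma nodup_iff_mask (l : List ℕ) (hl : ∀ x ∈ l, x < 16) (hlen : l.length = 16) :
    l.Nodup ↔ mask l = 65535 := by
  rw [mask_eq_iff l hl]
  constructor
  · intro hn k hk
    have hsub : l.toFinset ⊆ Finset.range 16 :=
      fun x hx => Finset.mem_range.mpr (hl x (List.mem_toFinset.mp hx))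
    have hcard : l.toFinset.card = 16 := by rw [List.toFinset_card_of_nodup hn, hlen]
    have heq : l.toFinset = Finset.range 16 :=
      Finset.eq_of_subset_of_card_le hsub (by rw [hcard]; simp)
    have hk' : k ∈ l.toFinset := by rw [heq]; exact Finset.mem_range.mpr hk
    exact List.mem_toFinset.mp hk'
  · intro h
    have hsub : Finset.range 16 ⊆ l.toFinset :=
      fun x hx => List.mem_toFinset.mpr (h x (Finset.mem_range.mp hx))
    have h1 : 16 ≤ l.toFinset.card := by simpa using Finset.card_le_card hsub
    have h2 := List.toFinset_card_le l
    have h3 := List.card_toFinset l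
    have h4 : l.dedup = l :=
      List.Sublist.eq_of_length (List.dedup_sublist l) (by omega)
    rw [← h4]
    exact l.nodup_dedup

lemma key_iff (w1 w2 w3 w4 : Fin 16) :
    Function.Injective (mkM (numToCard 4 w1.val) (numToCard 4 w2.val)
      (numToCard 4 w3.val) (numToCard 4 w4.val)) ↔
    mask (natList w1.val w2.val w3.val w4.val) = 65535 := by
  have hlt := natList_lt w1.val w2.val w3.val w4.val w1.isLt w2.isLt w3.isLt w4.isLt
  rw [inj_iff_nodup, map_mkM_eq, nodup_map_iff16 _ hlt, nodup_iff_mask _ hlt rfl]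

def leaf (a b c d : ℕ) : ℕ :=
  if ((((((((((((31 ||| 1 <<< a) ||| 1 <<< b) ||| 1 <<< (4^^^a^^^b)) ||| 256) ||| 1 <<< c)
      ||| 1 <<< d) ||| 1 <<< (8^^^c^^^d)) ||| 4096) ||| 1 <<< (1^^^a^^^c)) ||| 1 <<< (2^^^b^^^d))
      ||| 1 <<< (15^^^a^^^b^^^c^^^d)) : ℕ) = 65535 then 1 else 0

lemma mask_flat (a b c d : ℕ) : mask (natList a b c d) =
    ((((((((((((31 ||| 1 <<< a) ||| 1 <<< b) ||| 1 <<< (4^^^a^^^b)) ||| 256) ||| 1 <<< c)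
      ||| 1 <<< d) ||| 1 <<< (8^^^c^^^d)) ||| 4096) ||| 1 <<< (1^^^a^^^c)) ||| 1 <<< (2^^^b^^^d))
      ||| 1 <<< (15^^^a^^^b^^^c^^^d)) : ℕ) := rfl

lemma leaf_abstract (a b c d : ℕ) :
    (if mask (natList a b c d) = 65535 then 1 else 0) = leaf a b c d := by
  unfold leaf; rw [mask_flat]

lemma sum_range_eq_list (n : ℕ) (f : ℕ → ℕ) :
    ∑ i ∈ Finset.range n, f i = ((List.range n).map f).sum := rfl

set_option maxRecDepth 100000 in
set_option maxHeartbeats 10000000 in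
theorem semimagic_typeC_count_deck16 :
    Nat.card {M : Fin 4 × Fin 4 → Deck 4 //
      Function.Injective M ∧ IsSemimagic M ∧ IsTypeC M} = 112 := by
  rw [Nat.card_congr (E1.trans E2.symm)]
  rw [Nat.card_congr (Equiv.subtypeEquiv
    (q := fun w : Fin 16 × Fin 16 × Fin 16 × Fin 16 =>
      mask (natList w.1.val w.2.1.val w.2.2.1.val w.2.2.2.val) = 65535)
    (Equiv.refl (Fin 16 × Fin 16 × Fin 16 × Fin 16))
    (fun w => key_iff w.1 w.2.1 w.2.2.1 w.2.2.2))]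
  rw [Nat.card_eq_fintype_card, Fintype.card_subtype]
  rw [Finset.card_filter]
  simp only [← Finset.univ_product_univ, Finset.sum_product]
  simp only [leaf_abstract]
  simp only [Fin.sum_univ_eq_sum_range]
  simp only [sum_range_eq_list]
  rfl
end

section
/- There are exactly $839946240$ strongly magic quad squares using the cards from the standard EvenQuads deck of $64$ cards (the case $n = 6$); equivalently, $64 \cdot 63 \cdot 62 \cdot 60 \cdot 56 = 839946240$ is the number of strongly magic quad squares over $(\mathbb{Z}/2)^6$. -/
/-! Reading grid positions as points of `(ℤ/2)^4`, the quad through `0, a, b, a + b` forces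
`M (a + b) + M 0 = M a + M b`, so a strongly magic square is the same as an affine map
`(ℤ/2)^4 → (ℤ/2)^n`: a card `M 0` plus a linear map, which is injective exactly when it sends a
basis to a linearly independent 4-tuple. Hence there are `2^n ∏_{i<4} (2^n - 2^i)` injective
strongly magic squares. -/

open Function

section Basis

variable {ι R M N : Type*} [CommRing R] [AddCommGroup M] [Module R M]
  [AddCommGroup N] [Module R N]

noncomputable def Module.Basis.injectiveLinearMapEquiv (b : Module.Basis ι R M) :
    {f : M →ₗ[R] N // Function.Injective f} ≃ {v : ι → N // LinearIndependent R v} :=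
  (b.constr R).symm.toEquiv.subtypeEquiv fun f =>
    ⟨fun hf => b.linearIndependent.map' f (LinearMap.ker_eq_bot.2 hf),
      fun hv => LinearMap.injective_of_linearIndependent b.span_eq hv⟩

end Basis

section Quads

variable {V W : Type*} [AddCommGroup V] [AddCommGroup W]

def PreservesQuads (g : V → W) : Prop :=
  ∀ a b c d : V, a ≠ b → a ≠ c → a ≠ d → b ≠ c → b ≠ d → c ≠ d →
    a + b + c + d = 0 → g a + g b + g c + g d = 0

variable [Module (ZMod 2) V] [Module (ZMod 2) W]

open ZModModule

theorem PreservesQuads.map_add_add_map_zero {g : V → W} (hg : PreservesQuads g) (a b : V) :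
    g (a + b) + g 0 = g a + g b := by
  rcases eq_or_ne a 0 with rfl | ha
  · rw [zero_add, add_comm]
  rcases eq_or_ne b 0 with rfl | hb
  · rw [add_zero]
  rcases eq_or_ne a b with rfl | hab
  · rw [add_self a, add_self (g a), add_self]
  have hab' : 0 ≠ a + b := fun h => hab (by rw [← sub_eq_zero, sub_eq_add, h])
  have hquad := hg 0 a b (a + b) ha.symm hb.symm hab' hab (by simpa using hb) (by simpa using ha)
    (by rw [zero_add, add_self])
  rw [← sub_eq_zero, sub_eq_add, ← hquad]
  abel

noncomputable def PreservesQuads.linearPart {g : V → W} (hg : PreservesQuads g) :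
    V →ₗ[ZMod 2] W :=
  (AddMonoidHom.mk' (fun v => g v + g 0) fun a b => by
    rw [hg.map_add_add_map_zero, add_add_add_comm, add_self, add_zero]).toZModLinearMap 2

@[simp]
theorem PreservesQuads.linearPart_apply {g : V → W} (hg : PreservesQuads g) (v : V) :
    hg.linearPart v = g v + g 0 :=
  rfl

theorem LinearMap.preservesQuads_add_const (f : V →ₗ[ZMod 2] W) (c : W) :
    PreservesQuads fun v => f v + c := by
  intro a b c' d _ _ _ _ _ _ hsum
  calc f a + c + (f b + c) + (f c' + c) + (f d + c)
      = f (a + b + c' + d) + ((c + c) + (c + c)) := by simp only [map_add]; abel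
    _ = 0 := by rw [hsum, map_zero, add_self, add_zero]

noncomputable def preservesQuadsEquiv :
    {g : V → W // Injective g ∧ PreservesQuads g} ≃
      W × {f : V →ₗ[ZMod 2] W // Injective f} where
  toFun g := (g.1 0, ⟨g.2.2.linearPart, fun _ _ h => g.2.1 (add_left_injective _ h)⟩)
  invFun p := ⟨fun v => p.2.1 v + p.1, fun _ _ h => p.2.2 (add_left_injective _ h),
    p.2.1.preservesQuads_add_const p.1⟩
  left_inv g := Subtype.ext <| funext fun v => by simp [add_assoc, add_self]
  right_inv p := Prod.ext (by simp) <| Subtype.ext <| LinearMap.ext fun v => by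
    simp [add_assoc, add_self]

end Quads

noncomputable def posEquiv : Fin 4 × Fin 4 ≃ (Fin 2 → ZMod 2) × (Fin 2 → ZMod 2) :=
  Equiv.ofBijective posVec ⟨by decide, by decide⟩

@[simp]
theorem posEquiv_apply (p : Fin 4 × Fin 4) : posEquiv p = posVec p :=
  rfl

theorem isStronglyMagic_iff_preservesQuads {n : ℕ} (M : Fin 4 × Fin 4 → Deck n) :
    IsStronglyMagic M ↔ PreservesQuads (M ∘ posEquiv.symm) := by
  constructor
  · intro hM a b c d hab hac had hbc hbd hcd hsum
    have hne {x y} (h : x ≠ y) : posEquiv.symm x ≠ posEquiv.symm y := posEquiv.symm.injective.ne h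
    refine hM _ _ _ _ (hne hab) (hne hac) (hne had) (hne hbc) (hne hbd) (hne hcd) ?_
    simpa [← posEquiv_apply] using hsum
  · intro hM p1 p2 p3 p4 h12 h13 h14 h23 h24 h34 hsum
    have hne {x y} (h : x ≠ y) : posEquiv x ≠ posEquiv y := posEquiv.injective.ne h
    simpa only [comp_apply, Equiv.symm_apply_apply] using
      hM _ _ _ _ (hne h12) (hne h13) (hne h14) (hne h23) (hne h24) (hne h34) hsum

theorem card_injective_stronglyMagic {n : ℕ} (hn : 4 ≤ n) :
    Nat.card {M : Fin 4 × Fin 4 → Deck n // Injective M ∧ IsStronglyMagic M} =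
      2 ^ n * ∏ i : Fin 4, (2 ^ n - 2 ^ (i : ℕ)) := by
  have gridEquiv : {M : Fin 4 × Fin 4 → Deck n // Injective M ∧ IsStronglyMagic M} ≃
      {g : _ → Deck n // Injective g ∧ PreservesQuads g} :=
    (posEquiv.arrowCongr (Equiv.refl _)).subtypeEquiv fun M =>
      and_congr (posEquiv.symm.injective_comp M).symm (isStronglyMagic_iff_preservesQuads M)
  let b := ((Pi.basisFun (ZMod 2) (Fin 2)).prod (Pi.basisFun (ZMod 2) (Fin 2))).reindex
    finSumFinEquiv
  rw [Nat.card_congr (gridEquiv.trans (preservesQuadsEquiv.trans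
    (Equiv.prodCongrRight fun _ => b.injectiveLinearMapEquiv))), Nat.card_prod,
    card_linearIndependent]
  all_goals simp [Nat.card_eq_fintype_card, hn]

theorem stronglyMagic_count_deck64 :
    Nat.card {M : Fin 4 × Fin 4 → Deck 6 //
      Function.Injective M ∧ IsStronglyMagic M} = 839946240 := by
  rw [card_injective_stronglyMagic (by norm_num)]
  decide
end

section
/- Let $n \ge 4$. Every semimagic quad square $C$ of type C over the EvenQuads-$2^n$ deck can be written uniquely as an entrywise sum $C = A + B$ in $(\mathbb{Z}/2)^n$, where $A$ is a square of type A and $B$ is a square of type B. -/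
/-- The integer corresponding to a card via binary representation. -/
def cardToNat {n : ℕ} (c : Deck n) : ℕ := ∑ i : Fin n, (c i).val * 2 ^ i.val

/-- A square of type A: all entries correspond to integers less than 16, first row
`0,1,2,3`, first column `0,4,8,12`, all rows and columns sum to zero. -/
def IsTypeA {n : ℕ} (A : Fin 4 × Fin 4 → Deck n) : Prop :=
  (∀ p : Fin 4 × Fin 4, cardToNat (A p) < 16) ∧
  (∀ j : Fin 4, A (0, j) = numToCard n j.val) ∧
  (∀ i : Fin 4, A (i, 0) = numToCard n (4 * i.val)) ∧
  (∀ i : Fin 4, ∑ j : Fin 4, A (i, j) = 0) ∧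
  (∀ j : Fin 4, ∑ i : Fin 4, A (i, j) = 0)

/-- A square of type B: all entries correspond to integers divisible by 16, first row
and first column identically zero, all rows and columns sum to zero. -/
def IsTypeB {n : ℕ} (B : Fin 4 × Fin 4 → Deck n) : Prop :=
  (∀ p : Fin 4 × Fin 4, 16 ∣ cardToNat (B p)) ∧
  (∀ j : Fin 4, B (0, j) = 0) ∧
  (∀ i : Fin 4, B (i, 0) = 0) ∧
  (∀ i : Fin 4, ∑ j : Fin 4, B (i, j) = 0) ∧
  (∀ j : Fin 4, ∑ i : Fin 4, B (i, j) = 0)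

/-!
The integer of a card is the sum of its bits weighted by powers of two, so it is `< 16`
exactly when its bits from position 4 on vanish, and divisible by `16` exactly when its bits
below position 4 vanish. Hence `A` must be `C` with its high bits cleared and `B` must be `C`
with its low bits cleared. Clearing a fixed set of bits is additive, so both parts of a
semimagic square are again semimagic, and the first row and column of a type C square, being
`< 16`, are kept in `A` and cleared in `B`.
-/

open Finset

section Bits

variable {n : ℕ}

lemma sum_val_mul_two_pow_lt (c : Deck n) (k : ℕ) :
    ∑ i : Fin n with i.val < k, (c i).val * 2 ^ i.val < 2 ^ k :=
  calc ∑ i : Fin n with i.val < k, (c i).val * 2 ^ i.val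
      ≤ ∑ i : Fin n with i.val < k, 2 ^ i.val :=
        sum_le_sum fun i _ =>
          mul_le_of_le_one_left (Nat.zero_le _) (Nat.le_of_lt_succ (c i).val_lt)
    _ = ∑ j ∈ (univ.filter fun i : Fin n => i.val < k).map Fin.valEmbedding, 2 ^ j := by
        rw [sum_map]; rfl
    _ < 2 ^ k := Nat.geomSum_lt le_rfl (by simp)

lemma two_pow_dvd_sum_val_mul_two_pow (c : Deck n) (k : ℕ) :
    2 ^ k ∣ ∑ i : Fin n with ¬i.val < k, (c i).val * 2 ^ i.val :=
  dvd_sum fun _ hi => (pow_dvd_pow 2 (not_lt.mp (mem_filter.mp hi).2)).mul_left _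

lemma cardToNat_eq_sum_low_add_sum_high (c : Deck n) (k : ℕ) :
    cardToNat c = ∑ i : Fin n with i.val < k, (c i).val * 2 ^ i.val +
      ∑ i : Fin n with ¬i.val < k, (c i).val * 2 ^ i.val :=
  (sum_filter_add_sum_filter_not _ _ _).symm

theorem cardToNat_lt_two_pow_iff (c : Deck n) (k : ℕ) :
    cardToNat c < 2 ^ k ↔ ∀ i : Fin n, k ≤ i.val → c i = 0 := by
  have hlow := sum_val_mul_two_pow_lt c k
  have hhigh := two_pow_dvd_sum_val_mul_two_pow c k
  have hhigh_zero_iff : ∑ i : Fin n with ¬i.val < k, (c i).val * 2 ^ i.val = 0 ↔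
      ∀ i : Fin n, k ≤ i.val → c i = 0 := by
    simp
  rw [cardToNat_eq_sum_low_add_sum_high c k, ← hhigh_zero_iff]
  exact ⟨fun _ => Nat.eq_zero_of_dvd_of_lt hhigh (by omega), fun _ => by omega⟩

theorem two_pow_dvd_cardToNat_iff (c : Deck n) (k : ℕ) :
    2 ^ k ∣ cardToNat c ↔ ∀ i : Fin n, i.val < k → c i = 0 := by
  have hlow := sum_val_mul_two_pow_lt c k
  rw [cardToNat_eq_sum_low_add_sum_high c k,
    Nat.dvd_add_left (two_pow_dvd_sum_val_mul_two_pow c k)]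
  have hlow_dvd_iff : 2 ^ k ∣ ∑ i : Fin n with i.val < k, (c i).val * 2 ^ i.val ↔
      ∑ i : Fin n with i.val < k, (c i).val * 2 ^ i.val = 0 :=
    ⟨fun h => Nat.eq_zero_of_dvd_of_lt h hlow, fun h => h ▸ dvd_zero _⟩
  rw [hlow_dvd_iff]
  simp

lemma numToCard_apply_eq_zero {m k : ℕ} (hm : m < 2 ^ k) {i : Fin n} (hi : k ≤ i.val) :
    numToCard n m i = 0 := by
  simp [numToCard, Nat.testBit_lt_two_pow (hm.trans_le (Nat.pow_le_pow_right two_pos hi))]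

end Bits

lemma Set.indicator_add_eq_left_of_eqOn {ι M : Type*} [AddZeroClass M] {s : Set ι}
    {a b : ι → M} (ha : Set.EqOn a 0 sᶜ) (hb : Set.EqOn b 0 s) : s.indicator (a + b) = a := by
  funext i
  by_cases hi : i ∈ s
  · simp [hi, hb hi]
  · simp [hi, ha hi]

lemma Set.indicator_compl_add_eq_right_of_eqOn {ι M : Type*} [AddCommMonoid M] {s : Set ι}
    {a b : ι → M} (ha : Set.EqOn a 0 sᶜ) (hb : Set.EqOn b 0 s) :
    sᶜ.indicator (a + b) = b := by
  rw [add_comm]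
  exact indicator_add_eq_left_of_eqOn (by rwa [compl_compl]) ha

lemma indicator_setOf_val_lt_numToCard {n m k : ℕ} (hm : m < 2 ^ k) :
    {i : Fin n | i.val < k}.indicator (numToCard n m) = numToCard n m :=
  Set.indicator_eq_self.2 fun _ hi =>
    by_contra fun h => hi (numToCard_apply_eq_zero hm (not_lt.1 h))

lemma indicator_compl_setOf_val_lt_numToCard {n m k : ℕ} (hm : m < 2 ^ k) :
    {i : Fin n | i.val < k}ᶜ.indicator (numToCard n m) = 0 :=
  funext fun _ => Set.indicator_apply_eq_zero.2 fun hi =>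
    numToCard_apply_eq_zero hm (not_lt.1 hi)

section Squares

variable {n : ℕ}

lemma IsSemimagic.indicator {M : Fin 4 × Fin 4 → Deck n} (hM : IsSemimagic M)
    (s : Set (Fin n)) : IsSemimagic fun p => s.indicator (M p) :=
  ⟨fun i => by rw [← indicator_sum, hM.1 i, Set.indicator_zero'],
    fun j => by rw [← indicator_sum, hM.2 j, Set.indicator_zero']⟩

lemma IsTypeC.isTypeA_indicator {C : Fin 4 × Fin 4 → Deck n} (hC : IsTypeC C)
    (hsm : IsSemimagic C) : IsTypeA fun p => {i : Fin n | i.val < 4}.indicator (C p) :=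
  have hA := hsm.indicator {i : Fin n | i.val < 4}
  ⟨fun p => (cardToNat_lt_two_pow_iff _ 4).2 fun _ hi =>
      Set.indicator_of_notMem (s := {i : Fin n | i.val < 4}) (not_lt.2 hi) (C p),
    fun j => by dsimp only; rw [hC.1 j, indicator_setOf_val_lt_numToCard (by omega)],
    fun i => by dsimp only; rw [hC.2 i, indicator_setOf_val_lt_numToCard (by omega)],
    hA.1, hA.2⟩

lemma IsTypeC.isTypeB_indicator_compl {C : Fin 4 × Fin 4 → Deck n} (hC : IsTypeC C)
    (hsm : IsSemimagic C) : IsTypeB fun p => {i : Fin n | i.val < 4}ᶜ.indicator (C p) :=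
  have hB := hsm.indicator {i : Fin n | i.val < 4}ᶜ
  ⟨fun p => (two_pow_dvd_cardToNat_iff _ 4).2 fun _ hi =>
      Set.indicator_of_notMem (s := {i : Fin n | i.val < 4}ᶜ) (not_not.2 hi) (C p),
    fun j => by dsimp only; rw [hC.1 j, indicator_compl_setOf_val_lt_numToCard (by omega)],
    fun i => by dsimp only; rw [hC.2 i, indicator_compl_setOf_val_lt_numToCard (by omega)],
    hB.1, hB.2⟩

lemma IsTypeA.eqOn_zero {A : Fin 4 × Fin 4 → Deck n} (hA : IsTypeA A) (p : Fin 4 × Fin 4) :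
    Set.EqOn (A p) 0 {i : Fin n | i.val < 4}ᶜ :=
  fun i hi => (cardToNat_lt_two_pow_iff (A p) 4).1 (hA.1 p) i (not_lt.1 hi)

lemma IsTypeB.eqOn_zero {B : Fin 4 × Fin 4 → Deck n} (hB : IsTypeB B) (p : Fin 4 × Fin 4) :
    Set.EqOn (B p) 0 {i : Fin n | i.val < 4} :=
  fun i hi => (two_pow_dvd_cardToNat_iff (B p) 4).1 (hB.1 p) i hi

end Squares

theorem typeC_unique_decomposition_general (n : ℕ)
    (C : Fin 4 × Fin 4 → Deck n)
    (hsm : IsSemimagic C) (hC : IsTypeC C) :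
    ∃! AB : (Fin 4 × Fin 4 → Deck n) × (Fin 4 × Fin 4 → Deck n),
      IsTypeA AB.1 ∧ IsTypeB AB.2 ∧ C = AB.1 + AB.2 := by
  set s : Set (Fin n) := {i | i.val < 4}
  refine ⟨(fun p => s.indicator (C p), fun p => sᶜ.indicator (C p)),
    ⟨hC.isTypeA_indicator hsm, hC.isTypeB_indicator_compl hsm,
      funext fun p => (s.indicator_self_add_compl (C p)).symm⟩, ?_⟩
  rintro ⟨A, B⟩ ⟨hA, hB, rfl⟩
  exact Prod.ext
    (funext fun p => (Set.indicator_add_eq_left_of_eqOn (hA.eqOn_zero p) (hB.eqOn_zero p)).symm)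
    (funext fun p =>
      (Set.indicator_compl_add_eq_right_of_eqOn (hA.eqOn_zero p) (hB.eqOn_zero p)).symm)

theorem typeC_unique_decomposition (n : ℕ) (hn : 4 ≤ n)
    (C : Fin 4 × Fin 4 → Deck n)
    (hinj : Function.Injective C) (hsm : IsSemimagic C) (hC : IsTypeC C) :
    ∃! AB : (Fin 4 × Fin 4 → Deck n) × (Fin 4 × Fin 4 → Deck n),
      IsTypeA AB.1 ∧ IsTypeB AB.2 ∧ C = AB.1 + AB.2 :=
  typeC_unique_decomposition_general n C hsm hC
end
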